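/- (Tightness of the quadratic relationship between CDL and interval calibration error.) Define CE_Int(J) = sup over intervals I ⊆ [0,1] of | E_{(p,y)~J}[ 1[p ∈ I]·(y − p) ] |. Then for every ε ∈ (0, 1/2): (a) the distribution J₁ on [0,1] × {0,1} with p = 1 − ε and y = 1 almost surely satisfies CE_Int(J₁) ≤ ε and CDL_{M₊}(J₁) ≥ ε, hence CDL_{M₊}(J₁) ≥ CE_Int(J₁); (b) the distribution J₂ on [0,1] × {0,1} in which p is uniform on [0, 1−ε] and, conditionally on p, y ~ Bernoulli(p + ε), satisfies CE_Int(J₂) ≥ ε and CDL_{M₊}(J₂) ≤ 4ε², hence CDL_{M₊}(J₂) ≤ 4·CE_Int(J₂)². -/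

import Mathlib

/-!
For a point mass at `(p, 1)` the interval calibration error is `1 - p`, attained by
`I = [0, 1]`. The V-shaped loss with kink at `p` that breaks ties downwards, compared with the
constant post-processing `1`, gains `2 (1 - p)`, and properness caps the gain of every loss in
`L*` there.

For `J₂`, the interval `[0, 1]` again witnesses a calibration error of `ε`. For the decision
loss, properness bounds the gain of any post-processing at a prediction `p` whose true
probability is `p + ε` by `ε (g p - g (p + ε))`, where `g x = ℓ(x, 1) - ℓ(x, 0)`. Averaging over
`p ∈ [0, 1 - ε]` telescopes into two integrals of `g` over intervals of length `ε`, each at most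
`ε` in absolute value since `|g| ≤ 1`; this gives `2 ε² / (1 - ε) ≤ 4 ε²`.
-/

open MeasureTheory Set

noncomputable section

/-- Expected loss of prediction `p` when the outcome is `y ~ Bernoulli(q)`:
`ℓ(p,q) = q·ℓ(p,1) + (1−q)·ℓ(p,0)`. -/
def elos (ℓ : ℝ → ℝ → ℝ) (p q : ℝ) : ℝ := q * ℓ p 1 + (1 - q) * ℓ p 0

/-- A loss is proper if truthful prediction minimizes expected loss. -/
def IsProper (ℓ : ℝ → ℝ → ℝ) : Prop :=
  ∀ p ∈ Icc (0:ℝ) 1, ∀ q ∈ Icc (0:ℝ) 1, elos ℓ q q ≤ elos ℓ p q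

/-- The class `L*` of proper losses with `|ℓ(p,1) − ℓ(p,0)| ≤ 1`. -/
def Lstar (ℓ : ℝ → ℝ → ℝ) : Prop :=
  IsProper ℓ ∧ ∀ p ∈ Icc (0:ℝ) 1, |ℓ p 1 - ℓ p 0| ≤ 1

/-- Projection onto `[0,1]`. -/
def proj01 (x : ℝ) : ℝ := max 0 (min 1 x)

/-- Calibration decision loss of `J` relative to the post-processing class `K`:
`sup` over `ℓ ∈ L*` and `κ ∈ K` of `E[ℓ(p,y) − ℓ(κ(p),y)]`. -/
def CDL (K : Set (ℝ → ℝ)) (J : Measure (ℝ × ℝ)) : ℝ :=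
  sSup { x | ∃ ℓ κ, Lstar ℓ ∧ κ ∈ K ∧
    x = ∫ z, (ℓ z.1 z.2 - ℓ (κ z.1) z.2) ∂J }

/-- `sign_s(t)`: `+1` if `t > 0`, `−1` if `t < 0`, and `s` if `t = 0`. -/
def signS (s t : ℝ) : ℝ := if 0 < t then 1 else if t < 0 then -1 else s

/-- `sign₊ = sign_{+1}`. -/
def signP (t : ℝ) : ℝ := signS 1 t

/-- The V-shaped loss `ℓ_{v,s}(p,y) = −sign_s(p−v)·(y−v)`. -/
def vloss (v s : ℝ) : ℝ → ℝ → ℝ := fun p y => -(signS s (p - v)) * (y - v)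

/-- A valid post-processing class: maps `[0,1]` to `[0,1]`, contains the identity, and
is translation invariant. -/
def ValidClass (K : Set (ℝ → ℝ)) : Prop :=
  (∀ κ ∈ K, ∀ p ∈ Icc (0:ℝ) 1, κ p ∈ Icc (0:ℝ) 1) ∧
  ((fun p : ℝ => p) ∈ K) ∧
  (∀ s t : ℝ, ∀ κ ∈ K, (fun p : ℝ => proj01 (κ (proj01 (p + s)) + t)) ∈ K)

/-- Upper thresholds of a post-processing class. -/
def thr (K : Set (ℝ → ℝ)) : Set (ℝ → ℝ) :=
  { w | ∃ κ ∈ K, w = fun p => signP (κ p - 1/2) }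

/-- Modified thresholds: `thr(K)` together with all lower thresholds of the identity. -/
def thr' (K : Set (ℝ → ℝ)) : Set (ℝ → ℝ) :=
  thr K ∪ { w | ∃ v : ℝ, w = fun p => -signP (p - v) }

/-- Weight-restricted calibration error `CE_W(J) = sup_{w ∈ W} E[w(p)(y − p)]`. -/
def CE (W : Set (ℝ → ℝ)) (J : Measure (ℝ × ℝ)) : ℝ :=
  sSup { x | ∃ w ∈ W, x = ∫ z, w z.1 * (z.2 - z.1) ∂J }

/-- A probability distribution on `[0,1] × {0,1}`. -/
def IsPredDist (J : Measure (ℝ × ℝ)) : Prop :=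
  IsProbabilityMeasure J ∧ ∀ᵐ z ∂J, z.1 ∈ Icc (0:ℝ) 1 ∧ (z.2 = 0 ∨ z.2 = 1)

/-- The class `M₊` of nondecreasing post-processings `[0,1] → [0,1]`. -/
def Mplus : Set (ℝ → ℝ) :=
  { κ | (∀ p ∈ Icc (0:ℝ) 1, κ p ∈ Icc (0:ℝ) 1) ∧ MonotoneOn κ (Icc (0:ℝ) 1) }

/-- Interval-restricted calibration error:
`CE_Int(J) = sup_{intervals I ⊆ [0,1]} |E[1[p ∈ I]·(y − p)]|`. -/
def CEInt (J : Measure (ℝ × ℝ)) : ℝ :=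
  sSup { x | ∃ I : Set ℝ, I.OrdConnected ∧ I ⊆ Icc (0:ℝ) 1 ∧
    x = |∫ z, I.indicator (fun _ => (1:ℝ)) z.1 * (z.2 - z.1) ∂J| }

open scoped ENNReal

namespace IsProper

variable {ℓ : ℝ → ℝ → ℝ}

theorem elos_sub_le (hℓ : IsProper ℓ) {p q c : ℝ} (hp : p ∈ Icc (0:ℝ) 1)
    (hq : q ∈ Icc (0:ℝ) 1) (hc : c ∈ Icc (0:ℝ) 1) :
    elos ℓ p q - elos ℓ c q ≤ (q - p) * ((ℓ p 1 - ℓ p 0) - (ℓ q 1 - ℓ q 0)) := by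
  have h₁ := hℓ c hc q hq
  have h₂ := hℓ q hq p hp
  simp only [elos] at h₁ h₂ ⊢
  nlinarith

theorem antitoneOn_gap (hℓ : IsProper ℓ) :
    AntitoneOn (fun x => ℓ x 1 - ℓ x 0) (Icc (0:ℝ) 1) := by
  intro a ha b hb hab
  have h := hℓ.elos_sub_le ha hb ha
  rcases hab.eq_or_lt with rfl | hlt
  · exact le_rfl
  · simp only [sub_self] at h
    exact le_of_sub_nonneg (nonneg_of_mul_nonneg_right h (sub_pos.2 hlt))

end IsProper

theorem abs_signS_le {s : ℝ} (hs : |s| ≤ 1) (t : ℝ) : |signS s t| ≤ 1 := by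
  unfold signS; split_ifs <;> simp [hs]

theorem signS_mul_self (s t : ℝ) : signS s t * t = |t| := by
  unfold signS
  split_ifs with h₁ h₂
  · simp [abs_of_pos h₁]
  · simp [abs_of_neg h₂]
  · simp [le_antisymm (not_lt.1 h₁) (not_lt.1 h₂)]

theorem elos_vloss (v s p q : ℝ) : elos (vloss v s) p q = -(signS s (p - v) * (q - v)) := by
  simp only [elos, vloss]; ring

theorem lstar_vloss (v : ℝ) {s : ℝ} (hs : |s| ≤ 1) : Lstar (vloss v s) := by
  refine ⟨fun p _ q _ => ?_, fun p _ => ?_⟩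
  · rw [elos_vloss, elos_vloss, signS_mul_self, neg_le_neg_iff]
    calc signS s (p - v) * (q - v) ≤ |signS s (p - v)| * |q - v| := by
          rw [← abs_mul]; exact le_abs_self _
      _ ≤ 1 * |q - v| := by gcongr; exact abs_signS_le hs _
      _ = |q - v| := one_mul _
  · have hgap : vloss v s p 1 - vloss v s p 0 = -signS s (p - v) := by simp only [vloss]; ring
    rw [hgap, abs_neg]
    exact abs_signS_le hs _

theorem elos_one (ℓ : ℝ → ℝ → ℝ) (p : ℝ) : elos ℓ p 1 = ℓ p 1 := by simp [elos]

theorem Lstar.sub_le_two_mul {ℓ : ℝ → ℝ → ℝ} (hℓ : Lstar ℓ) {p c : ℝ} (hp : p ∈ Icc (0:ℝ) 1)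
    (hc : c ∈ Icc (0:ℝ) 1) : ℓ p 1 - ℓ c 1 ≤ 2 * (1 - p) := by
  have h1 : (1:ℝ) ∈ Icc (0:ℝ) 1 := right_mem_Icc.2 zero_le_one
  have h := hℓ.1.elos_sub_le hp h1 hc
  rw [elos_one, elos_one] at h
  have hgp := abs_le.1 (hℓ.2 p hp)
  have hg1 := abs_le.1 (hℓ.2 1 h1)
  nlinarith [hp.2]

theorem CEInt_dirac_one {p : ℝ} (hp : p ∈ Icc (0:ℝ) 1) :
    CEInt (Measure.dirac (p, 1)) = 1 - p := by
  have h1p : 0 ≤ 1 - p := sub_nonneg.2 hp.2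
  refine IsGreatest.csSup_eq ⟨⟨Icc 0 1, ordConnected_Icc, subset_rfl, ?_⟩, ?_⟩
  · simp [indicator_of_mem hp, abs_of_nonneg h1p]
  · rintro x ⟨I, -, -, rfl⟩
    by_cases h : p ∈ I <;> simp [h, abs_of_nonneg h1p, h1p]

theorem CDL_Mplus_dirac_one {p : ℝ} (hp : p ∈ Icc (0:ℝ) 1) :
    CDL Mplus (Measure.dirac (p, 1)) = 2 * (1 - p) := by
  refine IsGreatest.csSup_eq ⟨⟨vloss p (-1), fun _ => 1, lstar_vloss p (by norm_num), ?_, ?_⟩, ?_⟩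
  · exact ⟨fun _ _ => right_mem_Icc.2 zero_le_one, monotoneOn_const⟩
  · rw [integral_dirac]
    simp only [vloss, sub_self, neg_mul, signS_mul_self, abs_of_nonneg (sub_nonneg.2 hp.2)]
    simp [signS]
    ring
  · rintro x ⟨ℓ, κ, hℓ, hκ, rfl⟩
    simpa using hℓ.sub_le_two_mul hp (hκ.1 p hp)

theorem Measurable.smul_dirac {α β : Type*} [MeasurableSpace α] [MeasurableSpace β]
    {c : α → ℝ≥0∞} (hc : Measurable c) {f : α → β} (hf : Measurable f) :
    Measurable fun p => c p • Measure.dirac (f p) :=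
  Measure.measurable_of_measurable_coe _ fun _ hs =>
    hc.mul ((Measure.measurable_coe hs).comp (Measure.measurable_dirac.comp hf))

theorem integrable_and_integral_map_withDensity {α : Type*} [MeasurableSpace α] {ν : Measure α}
    {w : α → ℝ} (hw : Measurable w) (y : ℝ) {F : α × ℝ → ℝ}
    (hF : Integrable F ((ν.withDensity fun p => ENNReal.ofReal (w p)).map (·, y))) :
    Integrable (fun p => max (w p) 0 * F (p, y)) ν ∧
      ∫ z, F z ∂(ν.withDensity fun p => ENNReal.ofReal (w p)).map (·, y) =
        ∫ p, max (w p) 0 * F (p, y) ∂ν := by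
  have hlt : ∀ᵐ p ∂ν, ENNReal.ofReal (w p) < ⊤ := ae_of_all _ fun _ => ENNReal.ofReal_lt_top
  have hF' := hF.comp_measurable measurable_prodMk_right
  rw [integrable_withDensity_iff_integrable_smul' hw.ennreal_ofReal hlt] at hF'
  refine ⟨by simpa [ENNReal.toReal_ofReal'] using hF', ?_⟩
  rw [integral_map measurable_prodMk_right.aemeasurable hF.aestronglyMeasurable,
    integral_withDensity_eq_integral_toReal_smul hw.ennreal_ofReal hlt]
  simp [ENNReal.toReal_ofReal']

def bernoulliLabel (q : ℝ → ℝ) (p : ℝ) : Measure (ℝ × ℝ) :=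
  ENNReal.ofReal (q p) • Measure.dirac (p, 1) + ENNReal.ofReal (1 - q p) • Measure.dirac (p, 0)

section BernoulliLabel

variable {μ : Measure ℝ} {q : ℝ → ℝ}

theorem measurable_bernoulliLabel (hq : Measurable q) : Measurable (bernoulliLabel q) :=
  (hq.ennreal_ofReal.smul_dirac (by fun_prop)).add
    ((hq.const_sub 1).ennreal_ofReal.smul_dirac (by fun_prop))

theorem bind_bernoulliLabel (hq : Measurable q) :
    μ.bind (bernoulliLabel q) =
      (μ.withDensity fun p => ENNReal.ofReal (q p)).map (·, 1) +
        (μ.withDensity fun p => ENNReal.ofReal (1 - q p)).map (·, 0) := by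
  ext s hs
  have h₁ : MeasurableSet ((·, (1:ℝ)) ⁻¹' s) := measurable_prodMk_right hs
  have h₀ : MeasurableSet ((·, (0:ℝ)) ⁻¹' s) := measurable_prodMk_right hs
  rw [Measure.bind_apply hs (measurable_bernoulliLabel hq).aemeasurable, Measure.add_apply,
    Measure.map_apply measurable_prodMk_right hs, Measure.map_apply measurable_prodMk_right hs,
    withDensity_apply _ h₁, withDensity_apply _ h₀, ← lintegral_indicator h₁,
    ← lintegral_indicator h₀, ← lintegral_add_left ((hq.ennreal_ofReal).indicator h₁)]
  refine lintegral_congr fun p => ?_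
  by_cases hp₁ : (p, (1:ℝ)) ∈ s <;> by_cases hp₀ : (p, (0:ℝ)) ∈ s <;>
    simp [bernoulliLabel, Measure.dirac_apply' _ hs, indicator, hp₁, hp₀]

theorem ae_bind_bernoulliLabel (hq : Measurable q) {s : Set ℝ} (hs : MeasurableSet s)
    (hμs : ∀ᵐ p ∂μ, p ∈ s) :
    ∀ᵐ z ∂μ.bind (bernoulliLabel q), z.1 ∈ s ∧ (z.2 = 0 ∨ z.2 = 1) := by
  have hmeas : MeasurableSet {z : ℝ × ℝ | z.1 ∈ s ∧ (z.2 = 0 ∨ z.2 = 1)} :=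
    (measurable_fst hs).inter
      ((measurable_snd (measurableSet_singleton 0)).union
        (measurable_snd (measurableSet_singleton 1)))
  rw [bind_bernoulliLabel hq, ae_add_measure_iff,
    ae_map_iff measurable_prodMk_right.aemeasurable hmeas,
    ae_map_iff measurable_prodMk_right.aemeasurable hmeas]
  exact ⟨(withDensity_absolutelyContinuous _ _).ae_le (hμs.mono fun p hp => ⟨hp, Or.inr rfl⟩),
    (withDensity_absolutelyContinuous _ _).ae_le (hμs.mono fun p hp => ⟨hp, Or.inl rfl⟩)⟩

theorem isProbabilityMeasure_bind_bernoulliLabel [IsProbabilityMeasure μ] (hq : Measurable q)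
    (hq01 : ∀ᵐ p ∂μ, q p ∈ Icc (0:ℝ) 1) : IsProbabilityMeasure (μ.bind (bernoulliLabel q)) := by
  constructor
  rw [Measure.bind_apply MeasurableSet.univ (measurable_bernoulliLabel hq).aemeasurable]
  calc ∫⁻ p, bernoulliLabel q p univ ∂μ = ∫⁻ _, 1 ∂μ := by
        refine lintegral_congr_ae (hq01.mono fun p hp => ?_)
        simp [bernoulliLabel, ← ENNReal.ofReal_add hp.1 (sub_nonneg.2 hp.2)]
    _ = 1 := by simp

theorem integrable_and_integral_bind_bernoulliLabel (hq : Measurable q)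
    (hq01 : ∀ᵐ p ∂μ, q p ∈ Icc (0:ℝ) 1) {F : ℝ × ℝ → ℝ}
    (hF : Integrable F (μ.bind (bernoulliLabel q))) :
    Integrable (fun p => q p * F (p, 1) + (1 - q p) * F (p, 0)) μ ∧
      ∫ z, F z ∂μ.bind (bernoulliLabel q) = ∫ p, q p * F (p, 1) + (1 - q p) * F (p, 0) ∂μ := by
  rw [bind_bernoulliLabel hq] at hF ⊢
  obtain ⟨hint₁, heq₁⟩ := integrable_and_integral_map_withDensity hq 1 hF.left_of_add_measure
  obtain ⟨hint₀, heq₀⟩ :=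
    integrable_and_integral_map_withDensity (hq.const_sub 1) 0 hF.right_of_add_measure
  have hmax : (fun p => max (q p) 0 * F (p, 1) + max (1 - q p) 0 * F (p, 0)) =ᵐ[μ]
      fun p => q p * F (p, 1) + (1 - q p) * F (p, 0) := hq01.mono fun p hp => by
    simp only [max_eq_left hp.1, max_eq_left (sub_nonneg.2 hp.2)]
  refine ⟨(hint₁.add hint₀).congr hmax, ?_⟩
  rw [integral_add_measure hF.left_of_add_measure hF.right_of_add_measure, heq₁, heq₀,
    ← integral_add hint₁ hint₀]
  exact integral_congr_ae hmax

end BernoulliLabel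

def uniformIcc (a : ℝ) : Measure ℝ := (ENNReal.ofReal a)⁻¹ • volume.restrict (Icc 0 a)

section UniformIcc

variable {a : ℝ}

theorem isProbabilityMeasure_uniformIcc (ha : 0 < a) : IsProbabilityMeasure (uniformIcc a) :=
  ⟨by simp [uniformIcc, ENNReal.inv_mul_cancel, ha]⟩

theorem ae_mem_uniformIcc (a : ℝ) : ∀ᵐ x ∂uniformIcc a, x ∈ Icc 0 a :=
  Measure.ae_smul_measure (ae_restrict_mem measurableSet_Icc) _

theorem integral_uniformIcc (ha : 0 ≤ a) (f : ℝ → ℝ) :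
    ∫ x, f x ∂uniformIcc a = a⁻¹ * ∫ x in 0..a, f x := by
  rw [uniformIcc, integral_smul_measure, intervalIntegral.integral_of_le ha,
    integral_Icc_eq_integral_Ioc, ENNReal.toReal_inv, ENNReal.toReal_ofReal ha, smul_eq_mul]

theorem integrable_uniformIcc_iff (ha : 0 < a) {f : ℝ → ℝ} :
    Integrable f (uniformIcc a) ↔ IntervalIntegrable f volume 0 a := by
  rw [uniformIcc, integrable_smul_measure (by simp) (by simp [ha]),
    intervalIntegrable_iff_integrableOn_Icc_of_le ha.le, IntegrableOn]

end UniformIcc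

section Shift

variable {g : ℝ → ℝ} {ε : ℝ}

theorem IntervalIntegrable.comp_add_of_unitInterval (hg : IntervalIntegrable g volume 0 1)
    (hε₀ : 0 ≤ ε) (hε₁ : ε ≤ 1) :
    IntervalIntegrable (fun x => g (x + ε)) volume 0 (1 - ε) := by
  simpa using (hg.mono_set (uIcc_subset_uIcc_right (mem_uIcc_of_le hε₀ hε₁))).comp_add_right ε

theorem integral_sub_comp_add_le (hg : IntervalIntegrable g volume 0 1) {M : ℝ}
    (hM : ∀ x ∈ Icc (0:ℝ) 1, |g x| ≤ M) (hε₀ : 0 ≤ ε) (hε₁ : ε ≤ 1) :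
    ∫ x in 0..1 - ε, (g x - g (x + ε)) ≤ 2 * M * ε := by
  have hint : ∀ {b c}, b ∈ Icc (0:ℝ) 1 → c ∈ Icc (0:ℝ) 1 → IntervalIntegrable g volume b c :=
    fun hb hc => hg.mono_set (uIcc_subset_uIcc (by simpa using hb) (by simpa using hc))
  have hbound : ∀ {b c}, b ∈ Icc (0:ℝ) 1 → c ∈ Icc (0:ℝ) 1 → b ≤ c →
      |∫ x in b..c, g x| ≤ M * (c - b) := fun hb hc hbc => by
    have := intervalIntegral.norm_integral_le_of_norm_le_const (f := g) fun x hx =>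
      (Real.norm_eq_abs (g x)).trans_le <|
        hM x ⟨hb.1.trans (uIoc_of_le hbc ▸ hx).1.le, (uIoc_of_le hbc ▸ hx).2.trans hc.2⟩
    rwa [Real.norm_eq_abs, abs_of_nonneg (sub_nonneg.2 hbc)] at this
  have h0 : (0:ℝ) ∈ Icc (0:ℝ) 1 := left_mem_Icc.2 zero_le_one
  have h1 : (1:ℝ) ∈ Icc (0:ℝ) 1 := right_mem_Icc.2 zero_le_one
  have hε : ε ∈ Icc (0:ℝ) 1 := ⟨hε₀, hε₁⟩
  have h1ε : 1 - ε ∈ Icc (0:ℝ) 1 := ⟨sub_nonneg.2 hε₁, sub_le_self 1 hε₀⟩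
  have hshift : ∫ x in 0..1 - ε, g (x + ε) = ∫ x in ε..1, g x := by
    simp [intervalIntegral.integral_comp_add_right]
  rw [intervalIntegral.integral_sub (hint h0 h1ε) ?_, hshift,
    ← intervalIntegral.integral_add_adjacent_intervals (hint h0 hε) (hint hε h1ε),
    ← intervalIntegral.integral_add_adjacent_intervals (hint hε h1ε) (hint h1ε h1)]
  · have := abs_le.1 (hbound h0 hε hε₀)
    have := abs_le.1 (hbound h1ε h1 (sub_le_self 1 hε₀))
    linarith
  · exact hg.comp_add_of_unitInterval hε₀ hε₁

end Shift

namespace IsPredDist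

variable {J : Measure (ℝ × ℝ)} {w : ℝ → ℝ}

theorem ae_norm_mul_sub_le_one (hJ : IsPredDist J) (hw : ∀ p, |w p| ≤ 1) :
    ∀ᵐ z ∂J, ‖w z.1 * (z.2 - z.1)‖ ≤ 1 := hJ.2.mono fun z ⟨hz₁, hz₂⟩ => by
  have : |z.2 - z.1| ≤ 1 := by
    rw [abs_le]; rcases hz₂ with h | h <;> rw [h] <;> constructor <;> linarith [hz₁.1, hz₁.2]
  rw [Real.norm_eq_abs, abs_mul]
  exact mul_le_one₀ (hw _) (abs_nonneg _) this

theorem abs_integral_mul_sub_le_one (hJ : IsPredDist J) (hw : ∀ p, |w p| ≤ 1) :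
    |∫ z, w z.1 * (z.2 - z.1) ∂J| ≤ 1 := by
  have := hJ.1
  simpa using norm_integral_le_of_norm_le_const (hJ.ae_norm_mul_sub_le_one hw)

theorem integrable_mul_sub (hJ : IsPredDist J) (hw_meas : Measurable w) (hw : ∀ p, |w p| ≤ 1) :
    Integrable (fun z => w z.1 * (z.2 - z.1)) J :=
  haveI := hJ.1
  .of_bound (by fun_prop) 1 (hJ.ae_norm_mul_sub_le_one hw)

end IsPredDist

theorem abs_indicator_one_le_one (I : Set ℝ) (p : ℝ) : |I.indicator (fun _ => (1:ℝ)) p| ≤ 1 := by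
  by_cases h : p ∈ I <;> simp [h]

section Underpredicting

variable {ε : ℝ}

theorem ae_add_mem_Icc_uniformIcc (hε₀ : 0 ≤ ε) :
    ∀ᵐ p ∂uniformIcc (1 - ε), p + ε ∈ Icc (0:ℝ) 1 :=
  (ae_mem_uniformIcc _).mono fun p hp => ⟨by linarith [hp.1], by linarith [hp.2]⟩

theorem isPredDist_bind_bernoulliLabel_add (hε₀ : 0 ≤ ε) (hε₁ : ε < 1) :
    IsPredDist ((uniformIcc (1 - ε)).bind (bernoulliLabel (· + ε))) := by
  have := isProbabilityMeasure_uniformIcc (sub_pos.2 hε₁)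
  refine ⟨isProbabilityMeasure_bind_bernoulliLabel (by fun_prop) (ae_add_mem_Icc_uniformIcc hε₀),
    ae_bind_bernoulliLabel (by fun_prop) measurableSet_Icc ?_⟩
  exact (ae_mem_uniformIcc _).mono fun p hp => ⟨hp.1, hp.2.trans (sub_le_self 1 hε₀)⟩

theorem le_CEInt_bind_bernoulliLabel_add (hε₀ : 0 ≤ ε) (hε₁ : ε < 1) :
    ε ≤ CEInt ((uniformIcc (1 - ε)).bind (bernoulliLabel (· + ε))) := by
  have hJ := isPredDist_bind_bernoulliLabel_add hε₀ hε₁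
  have := isProbabilityMeasure_uniformIcc (sub_pos.2 hε₁)
  refine le_csSup ⟨1, ?_⟩ ⟨Icc 0 1, ordConnected_Icc, subset_rfl, ?_⟩
  · rintro _ ⟨I, -, -, rfl⟩
    exact hJ.abs_integral_mul_sub_le_one (abs_indicator_one_le_one I)
  · have hint := hJ.integrable_mul_sub (measurable_const.indicator measurableSet_Icc)
      (abs_indicator_one_le_one (Icc (0:ℝ) 1))
    rw [(integrable_and_integral_bind_bernoulliLabel (by fun_prop)
      (ae_add_mem_Icc_uniformIcc hε₀) hint).2]
    have : (fun p => (p + ε) * ((Icc (0:ℝ) 1).indicator (fun _ => (1:ℝ)) p * (1 - p)) +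
        (1 - (p + ε)) * ((Icc (0:ℝ) 1).indicator (fun _ => (1:ℝ)) p * (0 - p)))
        =ᵐ[uniformIcc (1 - ε)] fun _ => ε := (ae_mem_uniformIcc _).mono fun p hp => by
      have hp₁ : p ∈ Icc (0:ℝ) 1 := ⟨hp.1, hp.2.trans (sub_le_self 1 hε₀)⟩
      simp only [indicator_of_mem hp₁]
      ring
    rw [integral_congr_ae this]
    simp [abs_of_nonneg hε₀]

theorem CDL_bind_bernoulliLabel_add_le (hε₀ : 0 ≤ ε) (hε₁ : ε < 1) {K : Set (ℝ → ℝ)}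
    (hK : ∀ κ ∈ K, ∀ p ∈ Icc (0:ℝ) 1, κ p ∈ Icc (0:ℝ) 1) :
    CDL K ((uniformIcc (1 - ε)).bind (bernoulliLabel (· + ε))) ≤ 2 * ε ^ 2 / (1 - ε) := by
  have h1ε : 0 < 1 - ε := sub_pos.2 hε₁
  refine Real.sSup_le ?_ (by positivity)
  rintro _ ⟨ℓ, κ, hℓ, hκ, rfl⟩
  by_cases hF : Integrable (fun z => ℓ z.1 z.2 - ℓ (κ z.1) z.2)
    ((uniformIcc (1 - ε)).bind (bernoulliLabel (· + ε)))
  swap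
  -- `κ` need not be measurable, but a non-integrable integrand has integral `0`.
  · rw [integral_undef hF]; positivity
  obtain ⟨hGint, hG⟩ :=
    integrable_and_integral_bind_bernoulliLabel (by fun_prop) (ae_add_mem_Icc_uniformIcc hε₀) hF
  set g : ℝ → ℝ := fun x => ℓ x 1 - ℓ x 0
  have hg : IntervalIntegrable g volume 0 1 :=
    AntitoneOn.intervalIntegrable (by simpa using hℓ.1.antitoneOn_gap)
  have hgain : IntervalIntegrable (fun p => ε * (g p - g (p + ε))) volume 0 (1 - ε) :=
    ((hg.mono_set (uIcc_subset_uIcc_left (by simp [hε₀, hε₁.le]))).sub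
      (hg.comp_add_of_unitInterval hε₀ hε₁.le)).const_mul ε
  have hpointwise : ∀ p ∈ Icc 0 (1 - ε),
      (p + ε) * (ℓ p 1 - ℓ (κ p) 1) + (1 - (p + ε)) * (ℓ p 0 - ℓ (κ p) 0)
        ≤ ε * (g p - g (p + ε)) := fun p hp => by
    have hp₁ : p ∈ Icc (0:ℝ) 1 := ⟨hp.1, hp.2.trans (sub_le_self 1 hε₀)⟩
    have h := hℓ.1.elos_sub_le (q := p + ε) hp₁ ⟨by linarith [hp.1], by linarith [hp.2]⟩
      (hK κ hκ p hp₁)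
    simp only [elos, add_sub_cancel_left] at h
    linarith
  rw [hG, integral_uniformIcc h1ε.le, div_eq_mul_inv, mul_comm _ (1 - ε)⁻¹]
  calc
    _ ≤ (1 - ε)⁻¹ * ∫ p in 0..1 - ε, ε * (g p - g (p + ε)) := by
      gcongr
      exact intervalIntegral.integral_mono_on h1ε.le ((integrable_uniformIcc_iff h1ε).1 hGint)
        hgain hpointwise
    _ ≤ (1 - ε)⁻¹ * (ε * (2 * 1 * ε)) := by
      rw [intervalIntegral.integral_const_mul]
      gcongr
      exact integral_sub_comp_add_le hg (fun x hx => hℓ.2 x hx) hε₀ hε₁.le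
    _ = (1 - ε)⁻¹ * (2 * ε ^ 2) := by ring

end Underpredicting

/-- tightness of the quadratic relation between `CDL_{M₊}` and `CE_Int`. -/
theorem tightness_CDL_vs_CEInt (ε : ℝ) (hε : ε ∈ Ioo (0:ℝ) (1/2))
    (J₁ J₂ : Measure (ℝ × ℝ))
    (hJ₁ : J₁ = Measure.dirac ((1 - ε : ℝ), (1 : ℝ)))
    (hJ₂ : J₂ = ((ENNReal.ofReal (1 - ε))⁻¹ • volume.restrict (Icc (0:ℝ) (1 - ε))).bind
      (fun p : ℝ => ENNReal.ofReal (p + ε) • Measure.dirac (p, (1:ℝ)) +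
        ENNReal.ofReal (1 - (p + ε)) • Measure.dirac (p, (0:ℝ)))) :
    (CEInt J₁ ≤ ε ∧ ε ≤ CDL Mplus J₁ ∧ CEInt J₁ ≤ CDL Mplus J₁) ∧
    (ε ≤ CEInt J₂ ∧ CDL Mplus J₂ ≤ 4 * ε ^ 2 ∧ CDL Mplus J₂ ≤ 4 * CEInt J₂ ^ 2) := by
  obtain ⟨hε₀, hε₂⟩ := hε
  have hε₁ : ε < 1 := by linarith
  have hp : 1 - ε ∈ Icc (0:ℝ) 1 := ⟨by linarith, by linarith⟩
  have hJ₂' : J₂ = (uniformIcc (1 - ε)).bind (bernoulliLabel (· + ε)) := hJ₂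
  subst hJ₁ hJ₂'
  rw [CEInt_dirac_one hp, CDL_Mplus_dirac_one hp, sub_sub_cancel]
  have hCE := le_CEInt_bind_bernoulliLabel_add hε₀.le hε₁
  have hCDL : CDL Mplus ((uniformIcc (1 - ε)).bind (bernoulliLabel (· + ε))) ≤ 4 * ε ^ 2 := by
    refine (CDL_bind_bernoulliLabel_add_le hε₀.le hε₁ fun κ hκ => hκ.1).trans ?_
    rw [div_le_iff₀ (by linarith)]
    nlinarith
  exact ⟨⟨le_rfl, by linarith, by linarith⟩, hCE, hCDL, hCDL.trans (by gcongr)⟩
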